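/- arXiv:2312.11273 — 5 statements merged into one kernel-verified Lean document; each statement's English description precedes it below -/
import Mathlib

section
/- If X is a random variable taking values in the non-negative integers with mean μ and variance σ², then σ² ≥ (μ - ⌊μ⌋)(1 - μ + ⌊μ⌋). -/
/-!
Write `f` for the fractional part of `μ`. For every integer `n`, with `m = n - ⌊μ⌋`,
`(n - μ)² - f (1 - f) - (1 - 2f) (n - μ) = m (m - 1) ≥ 0`,
since no integer lies strictly between `0` and `1`. Integrating this pointwise bound, the linear
term vanishes because `X - μ` has mean zero, leaving `σ² ≥ f (1 - f)`.
-/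

open MeasureTheory

lemma Int.mul_sub_one_nonneg (m : ℤ) : 0 ≤ m * (m - 1) := by
  rcases le_or_gt m 0 with hm | hm <;> nlinarith

lemma Int.fract_mul_one_sub_fract_add_le_sq (n : ℤ) (x : ℝ) :
    Int.fract x * (1 - Int.fract x) + (1 - 2 * Int.fract x) * (n - x) ≤ (n - x) ^ 2 := by
  have hm : (0 : ℝ) ≤ ((n - ⌊x⌋ : ℤ) : ℝ) * ((n - ⌊x⌋ : ℤ) - 1) := by
    exact_mod_cast Int.mul_sub_one_nonneg (n - ⌊x⌋)
  rw [Int.fract]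
  push_cast at hm
  nlinarith

section

variable {Ω : Type*} [MeasurableSpace Ω] {ℙ : Measure Ω} [IsProbabilityMeasure ℙ]

lemma integral_const_add_mul_sub_integral {Y : Ω → ℝ} (hY : Integrable Y ℙ) (c d : ℝ) :
    ∫ ω, (c + d * (Y ω - ∫ ω', Y ω' ∂ℙ)) ∂ℙ = c := by
  have hlin : Integrable (fun ω => d * (Y ω - ∫ ω', Y ω' ∂ℙ)) ℙ :=
    (hY.sub (integrable_const _)).const_mul d
  rw [integral_add (integrable_const c) hlin, integral_const_mul,
    integral_sub hY (integrable_const _)]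
  simp

theorem Int.fract_mul_one_sub_fract_le_integral_sq_sub {X : Ω → ℤ}
    (hX1 : Integrable (fun ω => (X ω : ℝ)) ℙ) (hX2 : Integrable (fun ω => (X ω : ℝ) ^ 2) ℙ) :
    let μ := ∫ ω, (X ω : ℝ) ∂ℙ
    Int.fract μ * (1 - Int.fract μ) ≤ ∫ ω, ((X ω : ℝ) - μ) ^ 2 ∂ℙ := by
  intro μ
  have hX : MemLp (fun ω => (X ω : ℝ)) 2 ℙ :=
    (memLp_two_iff_integrable_sq hX1.aestronglyMeasurable).2 hX2
  calc Int.fract μ * (1 - Int.fract μ)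
      = ∫ ω, (Int.fract μ * (1 - Int.fract μ) + (1 - 2 * Int.fract μ) * ((X ω : ℝ) - μ)) ∂ℙ :=
        (integral_const_add_mul_sub_integral hX1 _ _).symm
    _ ≤ ∫ ω, ((X ω : ℝ) - μ) ^ 2 ∂ℙ :=
        integral_mono ((integrable_const _).add ((hX1.sub (integrable_const μ)).const_mul _))
          (hX.sub (memLp_const μ)).integrable_sq
          fun ω => Int.fract_mul_one_sub_fract_add_le_sq (X ω) μ

end

theorem nonneg_integer_rv_variance_lower_bound
    {Ω : Type*} [MeasurableSpace Ω] (ℙ : Measure Ω) [IsProbabilityMeasure ℙ]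
    (X : Ω → ℕ) (hX1 : Integrable (fun ω => (X ω : ℝ)) ℙ)
    (hX2 : Integrable (fun ω => ((X ω : ℝ)) ^ 2) ℙ)
    (μ : ℝ) (hμ : μ = ∫ ω, (X ω : ℝ) ∂ℙ)
    (σ2 : ℝ) (hσ : σ2 = ∫ ω, ((X ω : ℝ) - μ) ^ 2 ∂ℙ) :
    σ2 ≥ (μ - ⌊μ⌋) * (1 - μ + ⌊μ⌋) := by
  have key := Int.fract_mul_one_sub_fract_le_integral_sq_sub (X := fun ω => (X ω : ℤ))
    (by simpa using hX1) (by simpa using hX2)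
  simp only [Int.cast_natCast, ← hμ, ← hσ, Int.fract] at key
  linarith
end

section
/- Let μ ≥ 0 and σ² ≥ 0 satisfy the feasibility condition σ² ≥ (μ - ⌊μ⌋)(1 - μ + ⌊μ⌋). Let α ∈ [0,1], let d be any non-negative integer, and define μ' = α·d + (1-α)·μ and σ'² = α·(d - μ)² + (1-α)·σ². Then σ'² ≥ (μ' - ⌊μ'⌋)(1 - μ' + ⌊μ'⌋). -/
/-!
Fix `n = ⌊μ'⌋`. The parabola `p x = (x - n) * (1 - x + n)` satisfies
`p (α d + (1 - α) μ) = α p d + (1 - α) p μ + α (1 - α) (d - μ)²`.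
Among all integer shifts `x - n`, the fractional part `x - ⌊x⌋` maximises `t * (1 - t)`, so
`p μ ≤ σ²` by feasibility of `(μ, σ²)`, and `p d ≤ 0` since `d` is an integer;
finally `α (1 - α) ≤ α`.
-/

section FloorRing

variable {R : Type*} [CommRing R] [LinearOrder R] [IsStrictOrderedRing R]

theorem mul_one_sub_nonpos {t : R} (ht : t ≤ 0 ∨ 1 ≤ t) : t * (1 - t) ≤ 0 := by
  rcases ht with ht | ht
  · exact mul_nonpos_of_nonpos_of_nonneg ht (by linarith)
  · exact mul_nonpos_of_nonneg_of_nonpos (by linarith) (by linarith)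

theorem sub_mul_one_sub_add_le_floor [FloorRing R] (x : R) (n : ℤ) :
    (x - n) * (1 - x + n) ≤ (x - ⌊x⌋) * (1 - x + ⌊x⌋) := by
  rcases eq_or_ne n ⌊x⌋ with rfl | hne
  · exact le_rfl
  have hshift : x - n ≤ 0 ∨ 1 ≤ x - n := by
    rcases hne.lt_or_gt with h | h
    · right
      have : (n : R) + 1 ≤ ⌊x⌋ := by exact_mod_cast h
      linarith [Int.floor_le x]
    · left
      have : (⌊x⌋ : R) + 1 ≤ n := by exact_mod_cast h
      linarith [Int.lt_floor_add_one x]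
  calc (x - n) * (1 - x + n) = (x - n) * (1 - (x - n)) := by ring
    _ ≤ 0 := mul_one_sub_nonpos hshift
    _ ≤ (x - ⌊x⌋) * (1 - x + ⌊x⌋) :=
      mul_nonneg (sub_nonneg.mpr (Int.floor_le x)) (by linarith [Int.lt_floor_add_one x])

end FloorRing

theorem ses_update_preserves_feasibility_general
    (μ σ2 α : ℝ)
    (hfeas : σ2 ≥ (μ - ⌊μ⌋) * (1 - μ + ⌊μ⌋))
    (hα0 : 0 ≤ α) (hα1 : α ≤ 1) (d : ℕ)
    (μ' σ2' : ℝ)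
    (hμ' : μ' = α * d + (1 - α) * μ)
    (hσ' : σ2' = α * ((d : ℝ) - μ) ^ 2 + (1 - α) * σ2) :
    σ2' ≥ (μ' - ⌊μ'⌋) * (1 - μ' + ⌊μ'⌋) := by
  set n := ⌊μ'⌋
  have hd : ((d : ℝ) - n) * (1 - d + n) ≤ 0 := by
    simpa using sub_mul_one_sub_add_le_floor (d : ℝ) n
  have hμ : (μ - n) * (1 - μ + n) ≤ σ2 := (sub_mul_one_sub_add_le_floor μ n).trans hfeas
  have hconcave : (μ' - n) * (1 - μ' + n) = α * ((d - n) * (1 - d + n))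
      + (1 - α) * ((μ - n) * (1 - μ + n)) + α * (1 - α) * ((d : ℝ) - μ) ^ 2 := by
    rw [hμ']; ring
  rw [ge_iff_le, hconcave, hσ']
  linarith [mul_nonpos_of_nonneg_of_nonpos hα0 hd,
    mul_le_mul_of_nonneg_left hμ (sub_nonneg.mpr hα1), sq_nonneg (α * ((d : ℝ) - μ))]

theorem ses_update_preserves_feasibility
    (μ σ2 α : ℝ) (hμ : 0 ≤ μ) (hσ0 : 0 ≤ σ2)
    (hfeas : σ2 ≥ (μ - ⌊μ⌋) * (1 - μ + ⌊μ⌋))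
    (hα0 : 0 ≤ α) (hα1 : α ≤ 1) (d : ℕ)
    (μ' σ2' : ℝ)
    (hμ' : μ' = α * d + (1 - α) * μ)
    (hσ' : σ2' = α * ((d : ℝ) - μ) ^ 2 + (1 - α) * σ2) :
    σ2' ≥ (μ' - ⌊μ'⌋) * (1 - μ' + ⌊μ'⌋) :=
  ses_update_preserves_feasibility_general μ σ2 α hfeas hα0 hα1 d μ' σ2' hμ' hσ'
end

section
/- Let (D_t), (f_t), (MSE_t) satisfy: f_{t+1} = α D_t + (1-α) f_t, MSE_{t+1} = β (D_t - f_t)² + (1-β) MSE_t, with f_1, MSE_1 constants, and suppose E[D_{t+1} | D_1,…,D_t] = f_{t+1} and E[(D_{t+1} - f_{t+1})² | D_1,…,D_t] = MSE_{t+1} almost surely for all t (with this also holding for t = 0 with the unconditioned expectation). Then E[MSE_t] = MSE_1 for all t ≥ 1. -/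
/-!
Conditioning on the past and integrating (the tower property) turns the one-step-ahead
calibration `E[(D_{t+1} - f_{t+1})² | D_1, …, D_t] = MSE_{t+1}` into
`E[(D_t - f_t)²] = E[MSE_t]`. The smoothing recursion for `MSE` then averages two quantities
with the same expectation, so `E[MSE_t]` never moves from `MSE_1 = m1`.
-/

open MeasureTheory

namespace MeasureTheory

theorem integral_eq_of_condExp_ae_eq {Ω : Type*} {m m0 : MeasurableSpace Ω} {μ : Measure Ω}
    [IsFiniteMeasure μ] {g h : Ω → ℝ} (hm : m ≤ m0) (hcond : μ[g | m] =ᵐ[μ] h) :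
    ∫ ω, g ω ∂μ = ∫ ω, h ω ∂μ :=
  (integral_condExp hm).symm.trans (integral_congr_ae hcond)

theorem integral_convexComb_eq_of_integral_eq {Ω : Type*} {m0 : MeasurableSpace Ω}
    {μ : Measure Ω} {x y : Ω → ℝ} (β : ℝ) (hx : Integrable x μ) (hy : Integrable y μ)
    (hyx : ∫ ω, y ω ∂μ = ∫ ω, x ω ∂μ) :
    ∫ ω, β * y ω + (1 - β) * x ω ∂μ = ∫ ω, x ω ∂μ := by
  rw [integral_add (hy.const_mul β) (hx.const_mul (1 - β)), integral_const_mul,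
    integral_const_mul, hyx]
  ring

end MeasureTheory

theorem ses_consistent_dgp_mse_unbiased_general
    {Ω : Type*} {m0 : MeasurableSpace Ω} (ℙ : Measure Ω) [IsProbabilityMeasure ℙ]
    (D f MSE : ℕ → Ω → ℝ) (β m1 : ℝ)
    (hmeas : ∀ t, Measurable (D t))
    (hMSEint : ∀ t, Integrable (MSE t) ℙ)
    (hsqint : ∀ t, Integrable (fun ω => (D t ω - f t ω) ^ 2) ℙ)
    (hMSE1 : MSE 1 = fun _ => m1)
    (hMSErec : ∀ t ≥ 1, MSE (t + 1) = fun ω => β * (D t ω - f t ω) ^ 2 + (1 - β) * MSE t ω)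
    (hbase_var : (∫ ω, (D 1 ω - f 1 ω) ^ 2 ∂ℙ) = m1)
    (hcond_var : ∀ t ≥ 1,
      ℙ[(fun ω => (D (t + 1) ω - f (t + 1) ω) ^ 2) |
          ⨆ i ∈ Finset.Icc 1 t, MeasurableSpace.comap (D i) Real.measurableSpace]
        =ᵐ[ℙ] MSE (t + 1)) :
    ∀ t ≥ 1, (∫ ω, MSE t ω ∂ℙ) = m1 := by
  have hsq_eq_mse : ∀ t ≥ 1, ∫ ω, (D t ω - f t ω) ^ 2 ∂ℙ = ∫ ω, MSE t ω ∂ℙ := by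
    intro t ht
    induction t, ht using Nat.le_induction with
    | base => simp [hMSE1, hbase_var]
    | succ s hs _ =>
      have hpast : (⨆ i ∈ Finset.Icc 1 s, MeasurableSpace.comap (D i) Real.measurableSpace)
          ≤ m0 := iSup₂_le fun i _ => (hmeas i).comap_le
      exact integral_eq_of_condExp_ae_eq hpast (hcond_var s hs)
  intro t ht
  induction t, ht using Nat.le_induction with
  | base => simp [hMSE1]
  | succ t ht ih =>
    rw [hMSErec t ht, integral_convexComb_eq_of_integral_eq β (hMSEint t) (hsqint t)
      (hsq_eq_mse t ht), ih]

theorem ses_consistent_dgp_mse_unbiased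
    {Ω : Type*} {m0 : MeasurableSpace Ω} (ℙ : Measure Ω) [IsProbabilityMeasure ℙ]
    (D f MSE : ℕ → Ω → ℝ) (α β c m1 : ℝ)
    (hα0 : 0 ≤ α) (hα1 : α ≤ 1) (hβ0 : 0 ≤ β) (hβ1 : β ≤ 1)
    (hmeas : ∀ t, Measurable (D t))
    (hDint : ∀ t, Integrable (D t) ℙ)
    (hfint : ∀ t, Integrable (f t) ℙ)
    (hMSEint : ∀ t, Integrable (MSE t) ℙ)
    (hsqint : ∀ t, Integrable (fun ω => (D t ω - f t ω) ^ 2) ℙ)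
    (hf1 : f 1 = fun _ => c)
    (hMSE1 : MSE 1 = fun _ => m1)
    (hfrec : ∀ t ≥ 1, f (t + 1) = fun ω => α * D t ω + (1 - α) * f t ω)
    (hMSErec : ∀ t ≥ 1, MSE (t + 1) = fun ω => β * (D t ω - f t ω) ^ 2 + (1 - β) * MSE t ω)
    (hbase_mean : (∫ ω, D 1 ω ∂ℙ) = c)
    (hbase_var : (∫ ω, (D 1 ω - f 1 ω) ^ 2 ∂ℙ) = m1)
    (hcond_mean : ∀ t ≥ 1,
      ℙ[D (t + 1) | ⨆ i ∈ Finset.Icc 1 t, MeasurableSpace.comap (D i) Real.measurableSpace]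
        =ᵐ[ℙ] f (t + 1))
    (hcond_var : ∀ t ≥ 1,
      ℙ[(fun ω => (D (t + 1) ω - f (t + 1) ω) ^ 2) |
          ⨆ i ∈ Finset.Icc 1 t, MeasurableSpace.comap (D i) Real.measurableSpace]
        =ᵐ[ℙ] MSE (t + 1)) :
    ∀ t ≥ 1, (∫ ω, MSE t ω ∂ℙ) = m1 :=
  ses_consistent_dgp_mse_unbiased_general (m0 := m0) ℙ D f MSE β m1 hmeas hMSEint hsqint hMSE1
    hMSErec hbase_var hcond_var
end

section
/- Let δ ∈ [0,1), α ∈ [0,1], and let n be any integer. Let μ' = α n + (1-α) δ. Then α(n-δ)² + (1-α)δ(1-δ) ≥ (μ' - ⌊μ'⌋)(1 - μ' + ⌊μ'⌋). -/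
/-- Lipschitz-type bound: `g(x) ≤ g(δ) + |x - δ|` for `δ ∈ [0,1)`. -/
lemma ses_lip (x δ : ℝ) (h0 : 0 ≤ δ) (h1 : δ < 1) :
    (x - ⌊x⌋) * (1 - x + ⌊x⌋) ≤ δ * (1 - δ) + |x - δ| := by
  have hf1 : (⌊x⌋ : ℝ) ≤ x := Int.floor_le x
  have hf2 : x < ⌊x⌋ + 1 := Int.lt_floor_add_one x
  rcases le_or_gt 0 (x - δ) with h | h
  · rw [abs_of_nonneg h]
    rcases le_or_gt 1 (⌊x⌋ : ℝ) with hm | hm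
    · nlinarith [sq_nonneg (x - (⌊x⌋:ℝ))]
    · have hm0 : ⌊x⌋ = 0 := by
        have h1' : ⌊x⌋ < 1 := by exact_mod_cast hm
        have h2' : 0 ≤ ⌊x⌋ := Int.floor_nonneg.mpr (by linarith)
        omega
      rw [hm0]
      push_cast
      nlinarith [mul_nonneg h (by linarith : (0:ℝ) ≤ x + δ)]
  · rw [abs_of_neg h]
    rcases le_or_gt (⌊x⌋ : ℝ) (-1) with hm | hm
    · nlinarith [sq_nonneg (1 - x + (⌊x⌋:ℝ)), mul_nonneg h0 (by linarith : (0:ℝ) ≤ 2 - δ)]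
    · have hm0 : ⌊x⌋ = 0 := by
        have h1' : (-1:ℤ) < ⌊x⌋ := by exact_mod_cast hm
        have h2' : ⌊x⌋ < 1 := by rw [Int.floor_lt]; push_cast; linarith
        omega
      rw [hm0]
      push_cast
      nlinarith [mul_nonneg (by linarith : (0:ℝ) ≤ δ - x) (by linarith : (0:ℝ) ≤ 2 - δ - x)]

theorem ses_core_inequality
    (δ α : ℝ) (hδ0 : 0 ≤ δ) (hδ1 : δ < 1) (hα0 : 0 ≤ α) (hα1 : α ≤ 1)
    (n : ℤ) (μ' : ℝ) (hμ' : μ' = α * n + (1 - α) * δ) :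
    α * ((n : ℝ) - δ) ^ 2 + (1 - α) * (δ * (1 - δ)) ≥
      (μ' - ⌊μ'⌋) * (1 - μ' + ⌊μ'⌋) := by
  have hf1 : (⌊μ'⌋ : ℝ) ≤ μ' := Int.floor_le μ'
  have hf2 : μ' < ⌊μ'⌋ + 1 := Int.lt_floor_add_one μ'
  by_cases h0 : n = 0
  · subst h0
    have hm : ⌊μ'⌋ = 0 := by
      rw [Int.floor_eq_zero_iff]
      constructor
      · simp only [hμ']; push_cast; nlinarith
      · simp only [hμ']; push_cast; nlinarith
    rw [hm]
    push_cast
    simp only [hμ']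
    push_cast
    nlinarith [sq_nonneg (α * δ)]
  by_cases h1 : n = 1
  · subst h1
    by_cases he : μ' < 1
    · have hm : ⌊μ'⌋ = 0 := by
        rw [Int.floor_eq_zero_iff]
        constructor
        · simp only [hμ']; push_cast; nlinarith
        · simpa using he
      rw [hm]
      push_cast
      simp only [hμ']
      push_cast
      nlinarith [sq_nonneg (α * (1 - δ))]
    · have hge : (1:ℝ) ≤ μ' := le_of_not_gt he
      have hle : μ' ≤ 1 := by simp only [hμ']; push_cast; nlinarith
      have hμ1 : μ' = 1 := le_antisymm hle hge
      have hm : ⌊μ'⌋ = 1 := by rw [hμ1]; exact Int.floor_one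
      rw [hm, hμ1]
      push_cast
      nlinarith [mul_nonneg hα0 (sq_nonneg (1 - δ)),
        mul_nonneg (by linarith : (0:ℝ) ≤ 1 - α)
          (mul_nonneg hδ0 (by linarith : (0:ℝ) ≤ 1 - δ))]
  -- remaining: n ≤ -1 or n ≥ 2
  have hlip := ses_lip μ' δ hδ0 hδ1
  have hd : μ' - δ = α * ((n:ℝ) - δ) := by rw [hμ']; ring
  have habs : |μ' - δ| = α * |(n:ℝ) - δ| := by
    rw [hd, abs_mul, abs_of_nonneg hα0]
  -- key: t(t-1) ≥ δ(1-δ) where t = |n - δ|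
  have hkey : δ * (1 - δ) ≤ |(n:ℝ) - δ| * (|(n:ℝ) - δ| - 1) := by
    rcases lt_or_ge (n:ℝ) 0 with hn | hn
    · have hn1 : (n:ℝ) ≤ -1 := by
        have h' : n < 0 := by exact_mod_cast hn
        have : n ≤ -1 := by omega
        exact_mod_cast this
      rw [abs_of_neg (by linarith : (n:ℝ) - δ < 0)]
      nlinarith
    · have hn2 : (2:ℝ) ≤ (n:ℝ) := by
        have hnz : 0 ≤ n := by exact_mod_cast hn
        have : 2 ≤ n := by omega
        exact_mod_cast this
      rw [abs_of_nonneg (by linarith : (0:ℝ) ≤ (n:ℝ) - δ)]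
      nlinarith
  have habs2 : ((n:ℝ) - δ)^2 = |(n:ℝ) - δ|^2 := (sq_abs _).symm
  have ht0 : 0 ≤ |(n:ℝ) - δ| := abs_nonneg _
  calc (μ' - ⌊μ'⌋) * (1 - μ' + ⌊μ'⌋) ≤ δ * (1 - δ) + |μ' - δ| := hlip
    _ ≤ α * ((n : ℝ) - δ) ^ 2 + (1 - α) * (δ * (1 - δ)) := by
        rw [habs, habs2]
        nlinarith [mul_nonneg hα0 (by linarith :
          (0:ℝ) ≤ |(n:ℝ) - δ| * (|(n:ℝ) - δ| - 1) - δ * (1 - δ))]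
end

section
/- For any integer n, any δ ∈ [0,1), and any α ∈ [0,1]: α(n-δ)² + (1-α)δ(1-δ) ≥ frac(αn + (1-α)δ)·(1 - frac(αn + (1-α)δ)). -/
theorem ses_core_inequality_general_n
    (δ α : ℝ) (hδ0 : 0 ≤ δ) (hδ1 : δ < 1) (hα0 : 0 ≤ α) (hα1 : α ≤ 1) :
    ∀ n : ℤ, α * ((n : ℝ) - δ) ^ 2 + (1 - α) * (δ * (1 - δ)) ≥
      Int.fract (α * n + (1 - α) * δ) * (1 - Int.fract (α * n + (1 - α) * δ)) := by
  intro n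
  have hfr : Int.fract (α * n + (1 - α) * δ)
      = (α * n + (1 - α) * δ) - (⌊α * n + (1 - α) * δ⌋ : ℝ) := rfl
  set k : ℤ := ⌊α * n + (1 - α) * δ⌋ with hk
  -- nonnegativity of k*(k+1-2δ)
  have h2 : (0:ℝ) ≤ (k:ℝ) * ((k:ℝ) + 1 - 2*δ) := by
    rcases le_or_gt 1 k with h | h
    · have : (1:ℝ) ≤ (k:ℝ) := by exact_mod_cast h
      nlinarith
    · rcases eq_or_lt_of_le (show k ≤ 0 by omega) with h0 | h0
      · simp [h0]
      · have : (k:ℝ) ≤ -1 := by exact_mod_cast (by omega : k ≤ -1)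
        nlinarith
  -- nonnegativity of (n-k)(n-k-1)
  have h3 : (0:ℝ) ≤ ((n:ℝ) - k) * ((n:ℝ) - k - 1) := by
    have : (0:ℤ) ≤ (n - k) * (n - k - 1) := by
      rcases le_or_gt 1 (n - k) with h | h
      · exact mul_nonneg (by omega) (by omega)
      · nlinarith
    exact_mod_cast this
  have h1 : (0:ℝ) ≤ α^2 * ((n:ℝ) - δ)^2 := by positivity
  rw [hfr]
  nlinarith [mul_nonneg (sub_nonneg.2 hα1) h2, mul_nonneg hα0 h3, h1]
end
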